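/- Let γ > 0, and let U be a random variable with 0 ≤ U ≤ 1 almost surely such that either γ ≥ 1, or P(U = 1) ≥ 1 − γ. Set β_j = E[U^j] for j = 1, 2, 3. Then (β₂ − (1 − γ))(β₂ − β₁²) + (β₁ − (1 − γ))(β₂ − β₁² − β₃ + β₁β₂) ≥ 0. -/

import Mathlib

/-!
Put `a = 1 - γ` and `p = P(U = 1)`; the hypothesis says `a ≤ p`. The expression
`N(a) = snrNumerator a β₁ β₂ β₃` is affine in `a` with slope
`-(2β₂ - 2β₁² + β₁β₂ - β₃) = -E[(1 - U)((U - β₁)² + Var U)] ≤ 0`, so it is enough to show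
`N(p) ≥ 0`. With `α = 1 - β₁`, the product `α (1 - p) N(p)` is a square plus multiples of two
Cauchy–Schwarz defects: the Hankel inequality `(β₁ - β₂)² ≤ (1 - β₁)(β₂ - β₃)` for the measure
`(1 - U) dP`, and `E[1 - U]² ≤ P(U ≠ 1) E[(1 - U)²]`, which is where the atom at `1` enters.
-/

open MeasureTheory

theorem sq_integral_mul_le {α : Type*} [MeasurableSpace α] {μ : Measure α} {w g : α → ℝ}
    (hw : 0 ≤ᵐ[μ] w) (hw_int : Integrable w μ) (hwg : Integrable (fun x => w x * g x) μ)
    (hwg2 : Integrable (fun x => w x * g x ^ 2) μ) :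
    (∫ x, w x * g x ∂μ) ^ 2 ≤ (∫ x, w x ∂μ) * ∫ x, w x * g x ^ 2 ∂μ := by
  have hquad : ∀ t : ℝ, 0 ≤ (∫ x, w x ∂μ) * (t * t) + (-2 * ∫ x, w x * g x ∂μ) * t +
      ∫ x, w x * g x ^ 2 ∂μ := by
    intro t
    have hexp : ∫ x, w x * (g x - t) ^ 2 ∂μ = ∫ x, w x * g x ^ 2 ∂μ
        - 2 * t * ∫ x, w x * g x ∂μ + t ^ 2 * ∫ x, w x ∂μ := by
      have e : (fun x => w x * (g x - t) ^ 2)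
          = fun x => w x * g x ^ 2 - 2 * t * (w x * g x) + t ^ 2 * w x := by
        ext x; ring
      have hdiff : Integrable (fun x => w x * g x ^ 2 - 2 * t * (w x * g x)) μ :=
        hwg2.sub (hwg.const_mul _)
      rw [e, integral_add hdiff (hw_int.const_mul _), integral_sub hwg2 (hwg.const_mul _),
        integral_const_mul, integral_const_mul]
    have hnonneg : 0 ≤ ∫ x, w x * (g x - t) ^ 2 ∂μ :=
      integral_nonneg_of_ae <| hw.mono fun x hx => mul_nonneg hx (sq_nonneg _)
    linarith
  have := discrim_le_zero hquad
  rw [discrim] at this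
  linarith

section UnitInterval

variable {Ω : Type*} [MeasurableSpace Ω] {P : Measure Ω} [IsProbabilityMeasure P] {U : Ω → ℝ}
  (hU : Measurable U) (hb : ∀ᵐ ω ∂P, U ω ∈ Set.Icc (0 : ℝ) 1)
include hU hb

theorem integrable_pow_of_ae_mem_Icc (n : ℕ) : Integrable (fun ω => U ω ^ n) P := by
  refine .of_bound (hU.pow_const n).aestronglyMeasurable 1 (hb.mono fun ω hω => ?_)
  rw [Real.norm_eq_abs, abs_pow]
  exact pow_le_one₀ (abs_nonneg _) (abs_le.2 ⟨by linarith [hω.1], hω.2⟩)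

theorem integrable_of_ae_mem_Icc : Integrable U P := by
  simpa using integrable_pow_of_ae_mem_Icc hU hb 1

theorem sq_integral_sub_integral_sq_le :
    (∫ ω, U ω ∂P - ∫ ω, U ω ^ 2 ∂P) ^ 2 ≤
      (1 - ∫ ω, U ω ∂P) * (∫ ω, U ω ^ 2 ∂P - ∫ ω, U ω ^ 3 ∂P) := by
  have hU_pow := integrable_pow_of_ae_mem_Icc hU hb
  have hU_int := integrable_of_ae_mem_Icc hU hb
  have e1 : (fun ω => (1 - U ω) * U ω) = fun ω => U ω - U ω ^ 2 := by ext; ring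
  have e2 : (fun ω => (1 - U ω) * U ω ^ 2) = fun ω => U ω ^ 2 - U ω ^ 3 := by ext; ring
  have h := sq_integral_mul_le (w := fun ω => 1 - U ω) (g := U)
    (hb.mono fun ω hω => sub_nonneg.2 hω.2) ((integrable_const 1).sub hU_int)
    (e1 ▸ hU_int.sub (hU_pow 2)) (e2 ▸ (hU_pow 2).sub (hU_pow 3))
  rwa [e1, e2, integral_sub (integrable_const 1) hU_int, integral_sub hU_int (hU_pow 2),
    integral_sub (hU_pow 2) (hU_pow 3), integral_const, probReal_univ, one_smul] at h

theorem sq_one_sub_integral_le :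
    (1 - ∫ ω, U ω ∂P) ^ 2 ≤
      (1 - P.real {ω | U ω = 1}) * (1 - 2 * ∫ ω, U ω ∂P + ∫ ω, U ω ^ 2 ∂P) := by
  have hU_pow := integrable_pow_of_ae_mem_Icc hU hb
  have hU_int := integrable_of_ae_mem_Icc hU hb
  have hS : MeasurableSet {ω | U ω = 1} := hU (measurableSet_singleton 1)
  set w := {ω | U ω = 1}ᶜ.indicator (1 : Ω → ℝ)
  have hw : ∀ ω, w ω * (1 - U ω) = 1 - U ω := fun ω => by
    by_cases h : U ω = 1 <;> simp [w, h]
  have hw2 : ∀ ω, w ω * (1 - U ω) ^ 2 = 1 - 2 * U ω + U ω ^ 2 := fun ω => by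
    rw [sq, ← mul_assoc, hw]; ring
  have h1U : Integrable (fun ω => 1 - U ω) P := (integrable_const 1).sub hU_int
  have h12U : Integrable (fun ω => 1 - 2 * U ω) P := (integrable_const 1).sub (hU_int.const_mul 2)
  have hsq : Integrable (fun ω => 1 - 2 * U ω + U ω ^ 2) P := h12U.add (hU_pow 2)
  have h := sq_integral_mul_le (w := w) (g := fun ω => 1 - U ω)
    (Filter.Eventually.of_forall fun ω => Set.indicator_nonneg (fun _ _ => zero_le_one) ω)
    ((integrable_const 1).indicator hS.compl)
    (by simpa only [hw] using h1U) (by simpa only [hw2] using hsq)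
  simp only [hw, hw2] at h
  rwa [integral_indicator_one hS.compl, probReal_compl_eq_one_sub hS,
    integral_sub (integrable_const 1) hU_int, integral_add h12U (hU_pow 2),
    integral_sub (integrable_const 1) (hU_int.const_mul 2), integral_const_mul, integral_const,
    probReal_univ, one_smul] at h

theorem measureReal_eq_one_le_integral : P.real {ω | U ω = 1} ≤ ∫ ω, U ω ∂P := by
  calc P.real {ω | U ω = 1} ≤ P.real {ω | 1 ≤ U ω} :=
        measureReal_mono fun ω (h : U ω = 1) => h.ge
    _ ≤ ∫ ω, U ω ∂P := by
        simpa using mul_meas_ge_le_integral_of_nonneg (hb.mono fun ω hω => hω.1)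
          (integrable_of_ae_mem_Icc hU hb) 1

end UnitInterval

def snrNumerator (a β₁ β₂ β₃ : ℝ) : ℝ :=
  (β₂ - a) * (β₂ - β₁ ^ 2) + (β₁ - a) * (β₂ - β₁ ^ 2 - β₃ + β₁ * β₂)

section MomentInequalities

variable {p β₁ β₂ β₃ : ℝ} (hp : 0 ≤ p) (hpβ : p ≤ β₁) (hβ₁ : β₁ < 1)
  (hH : (β₁ - β₂) ^ 2 ≤ (1 - β₁) * (β₂ - β₃))
  (hS : (1 - β₁) ^ 2 ≤ (1 - p) * (1 - 2 * β₁ + β₂))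
include hp hpβ hβ₁ hH hS

theorem snrNumerator_self_nonneg : 0 ≤ snrNumerator p β₁ β₂ β₃ := by
  have hpos : 0 < (1 - β₁) * (1 - p) := mul_pos (by linarith) (by linarith)
  have hsos : (1 - β₁) * (1 - p) * snrNumerator p β₁ β₂ β₃ =
      ((1 - β₁) * (β₂ - p) - (β₁ - p) * (β₁ - β₂)) ^ 2
        + (β₁ - p) * (1 - p) * ((1 - β₁) * (β₂ - β₃) - (β₁ - β₂) ^ 2)
        + p * (1 - β₁) ^ 2 * ((1 - p) * (1 - 2 * β₁ + β₂) - (1 - β₁) ^ 2) := by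
    unfold snrNumerator; ring
  refine (mul_nonneg_iff_of_pos_left hpos).1 (hsos ▸ add_nonneg (add_nonneg (sq_nonneg _) ?_) ?_)
  · exact mul_nonneg (mul_nonneg (by linarith) (by linarith)) (by linarith)
  · exact mul_nonneg (mul_nonneg hp (sq_nonneg _)) (by linarith)

theorem snrNumerator_slope_nonneg : 0 ≤ 2 * β₂ - 2 * β₁ ^ 2 + β₁ * β₂ - β₃ := by
  have ha : 0 < 1 - β₁ := by linarith
  have hE : 0 ≤ 1 - 2 * β₁ + β₂ :=
    nonneg_of_mul_nonneg_right (hS.trans' (sq_nonneg _)) (by linarith)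
  have hvar : 0 ≤ β₂ - β₁ ^ 2 := by nlinarith
  have hsos : (1 - β₁) * (2 * β₂ - 2 * β₁ ^ 2 + β₁ * β₂ - β₃) =
      ((1 - β₁) * β₁ - (β₁ - β₂)) ^ 2 + ((1 - β₁) * (β₂ - β₃) - (β₁ - β₂) ^ 2)
        + (1 - β₁) ^ 2 * (β₂ - β₁ ^ 2) := by ring
  refine (mul_nonneg_iff_of_pos_left ha).1 (hsos ▸ add_nonneg (add_nonneg (sq_nonneg _) ?_) ?_)
  · linarith
  · exact mul_nonneg (sq_nonneg _) hvar

end MomentInequalities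

theorem snrNumerator_nonneg {a p β₁ β₂ β₃ : ℝ} (hap : a ≤ p) (hp : 0 ≤ p) (hpβ : p ≤ β₁)
    (hβ₁ : β₁ ≤ 1) (hβ₃ : β₃ ≤ β₂) (hH : (β₁ - β₂) ^ 2 ≤ (1 - β₁) * (β₂ - β₃))
    (hS : (1 - β₁) ^ 2 ≤ (1 - p) * (1 - 2 * β₁ + β₂)) :
    0 ≤ snrNumerator a β₁ β₂ β₃ := by
  rcases hβ₁.eq_or_lt with rfl | hβ₁
  · obtain rfl : β₂ = 1 := by nlinarith
    unfold snrNumerator; nlinarith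
  · have e : snrNumerator a β₁ β₂ β₃ = snrNumerator p β₁ β₂ β₃
        + (p - a) * (2 * β₂ - 2 * β₁ ^ 2 + β₁ * β₂ - β₃) := by
      unfold snrNumerator; ring
    rw [e]
    exact add_nonneg (snrNumerator_self_nonneg hp hpβ hβ₁ hH hS)
      (mul_nonneg (sub_nonneg.2 hap) (snrNumerator_slope_nonneg hp hpβ hβ₁ hH hS))

theorem stmt_13_general {Ω : Type*} [MeasurableSpace Ω] (P : Measure Ω) [IsProbabilityMeasure P]
    (γ : ℝ)
    (U : Ω → ℝ) (hU : Measurable U) (hb : ∀ᵐ ω ∂P, U ω ∈ Set.Icc (0 : ℝ) 1)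
    (hcase : 1 ≤ γ ∨ ENNReal.ofReal (1 - γ) ≤ P {ω | U ω = 1})
    (β₁ β₂ β₃ : ℝ)
    (h1 : β₁ = ∫ ω, U ω ∂P) (h2 : β₂ = ∫ ω, (U ω) ^ 2 ∂P)
    (h3 : β₃ = ∫ ω, (U ω) ^ 3 ∂P) :
    0 ≤ (β₂ - (1 - γ)) * (β₂ - β₁ ^ 2) +
        (β₁ - (1 - γ)) * (β₂ - β₁ ^ 2 - β₃ + β₁ * β₂) := by
  subst h1 h2 h3
  have hp : 0 ≤ P.real {ω | U ω = 1} := measureReal_nonneg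
  have hγp : 1 - γ ≤ P.real {ω | U ω = 1} := by
    rcases hcase with hγ | hatom
    · linarith
    · exact (ENNReal.ofReal_le_iff_le_toReal (measure_ne_top _ _)).1 hatom
  have hβ₁ : ∫ ω, U ω ∂P ≤ 1 := by
    simpa using integral_mono_ae (integrable_of_ae_mem_Icc hU hb) (integrable_const 1)
      (hb.mono fun ω hω => hω.2)
  have hβ₃ : ∫ ω, U ω ^ 3 ∂P ≤ ∫ ω, U ω ^ 2 ∂P :=
    integral_mono_ae (integrable_pow_of_ae_mem_Icc hU hb 3) (integrable_pow_of_ae_mem_Icc hU hb 2)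
      (hb.mono fun ω hω => pow_le_pow_of_le_one hω.1 hω.2 (by norm_num))
  exact snrNumerator_nonneg hγp hp (measureReal_eq_one_le_integral hU hb) hβ₁ hβ₃
    (sq_integral_sub_integral_sq_le hU hb) (sq_one_sub_integral_le hU hb)

/-- Let `γ > 0` and let `U ∈ [0,1]` a.s. with either `γ ≥ 1` or
`P(U = 1) ≥ 1 - γ`. With `β_j = E[U^j]`,
`(β₂-(1-γ))(β₂-β₁²) + (β₁-(1-γ))(β₂-β₁²-β₃+β₁β₂) ≥ 0`. -/
theorem stmt_13 {Ω : Type*} [MeasurableSpace Ω] (P : Measure Ω) [IsProbabilityMeasure P]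
    (γ : ℝ) (hγ : 0 < γ)
    (U : Ω → ℝ) (hU : Measurable U) (hb : ∀ᵐ ω ∂P, U ω ∈ Set.Icc (0 : ℝ) 1)
    (hcase : 1 ≤ γ ∨ ENNReal.ofReal (1 - γ) ≤ P {ω | U ω = 1})
    (β₁ β₂ β₃ : ℝ)
    (h1 : β₁ = ∫ ω, U ω ∂P) (h2 : β₂ = ∫ ω, (U ω) ^ 2 ∂P)
    (h3 : β₃ = ∫ ω, (U ω) ^ 3 ∂P) :
    0 ≤ (β₂ - (1 - γ)) * (β₂ - β₁ ^ 2) +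
        (β₁ - (1 - γ)) * (β₂ - β₁ ^ 2 - β₃ + β₁ * β₂) :=
  stmt_13_general P γ U hU hb hcase β₁ β₂ β₃ h1 h2 h3
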